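/- Let n, p, k be positive integers with k ≤ n, and let f_j : [0,T] → ℝ (j=1,...,n) and g_i : [0,T] → ℝ (i=1,...,p) be integrable. Then the nested iterated integral ∫_{Δ^n_{θ,t}} f_1(s_1)...f_k(s_k) (∫_{Δ^p_{θ,s_k}} g_1(r_1)...g_p(r_p) dr) f_{k+1}(s_{k+1})...f_n(s_n) ds can be written as a sum, over a set A_{n,p} of permutations of {1,...,n+p} with cardinality at most C^{n+p} for some universal constant C ≥ 1, of iterated simplex integrals ∫_{Δ^{n+p}_{θ,t}} h^σ_1(w_1)...h^σ_{n+p}(w_{n+p}) dw where each h^σ_l belongs to {f_1,...,f_n, g_1,...,g_p}. -/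

import Mathlib

open MeasureTheory Finset

/-- The `m`-dimensional simplex `{(s_m,…,s_1) : θ < s_m < … < s_1 < t}`, with coordinates
strictly decreasing in the index (so `s 0` is the largest coordinate `s_1`). -/
def simplex (m : ℕ) (θ t : ℝ) : Set (Fin m → ℝ) :=
  {s | (∀ i j : Fin m, i < j → s j < s i) ∧ ∀ i, θ < s i ∧ s i < t}

/-! Put the outer variables `s` and the inner variables `r` side by side in one vector
`w ∈ ℝ^(n+p)`. By Fubini the nested integral is the integral of `∏ l, h_l (w l)` over the region
where `s` and `r` are decreasing and every `r i` lies below `s k`. Off the null set where two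
coordinates coincide, the box `(θ, t)^(n+p)` is the disjoint union of the cells on which the
coordinates are ordered according to a permutation `σ`, and the region is the union of the cells
whose `σ` is a shuffle of `s` and `r` placing all of `r` after `s k`. Each cell is the simplex
with permuted coordinates, so each such shuffle contributes one iterated simplex integral, and
there are at most `C(n+p, n) ≤ 2^(n+p)` shuffles. -/

open Function

section OrderCell

variable {m : ℕ} {θ t : ℝ}

lemma measurableSet_setOf_mem_simplex {α : Type*} [MeasurableSpace α] {u : α → Fin m → ℝ}
    {τ : α → ℝ} (hu : Measurable u) (hτ : Measurable τ) :
    MeasurableSet {x | u x ∈ simplex m θ (τ x)} := by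
  simp only [simplex, Set.mem_ofPred_eq]
  exact measurableSet_setOfPred.2 (by fun_prop)

lemma measurableSet_simplex : MeasurableSet (simplex m θ t) :=
  measurableSet_setOf_mem_simplex (u := id) measurable_id measurable_const

/-- `v ∈ orderCell m θ t σ` iff `θ < v (σ (m - 1)) < ⋯ < v (σ 0) < t`, so `σ⁻¹ l` is the rank
of `v l` in decreasing order. -/
def orderCell (m : ℕ) (θ t : ℝ) (σ : Equiv.Perm (Fin m)) : Set (Fin m → ℝ) :=
  (· ∘ σ) ⁻¹' simplex m θ t

lemma measurableSet_orderCell (σ : Equiv.Perm (Fin m)) : MeasurableSet (orderCell m θ t σ) :=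
  measurableSet_simplex.preimage (measurable_pi_lambda _ fun i => measurable_pi_apply (σ i))

variable {σ : Equiv.Perm (Fin m)} {v : Fin m → ℝ}

lemma orderCell_subset_pi : orderCell m θ t σ ⊆ Set.univ.pi fun _ => Set.Ioo θ t :=
  fun v hv => Set.mem_univ_pi.2 fun x => by simpa using hv.2 (σ⁻¹ x)

lemma lt_iff_of_mem_orderCell (hv : v ∈ orderCell m θ t σ) (x y : Fin m) :
    v y < v x ↔ σ⁻¹ x < σ⁻¹ y := by
  have hanti : StrictAnti (v ∘ σ) := hv.1
  simpa using (hanti.lt_iff_gt (a := σ⁻¹ y) (b := σ⁻¹ x))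

lemma pairwise_disjoint_orderCell : Pairwise (Disjoint on orderCell m θ t) := by
  intro σ τ hστ
  refine Set.disjoint_left.2 fun v hσ hτ => hστ ?_
  have hσ' : StrictAnti (v ∘ σ) := hσ.1
  have hτ' : StrictAnti (v ∘ τ) := hτ.1
  have hinj : Injective v := by
    simpa [Function.comp_assoc] using hσ'.injective.comp (Equiv.injective σ⁻¹)
  have hcomp : v ∘ σ = v ∘ τ := by
    rw [← hσ'.range_inj hτ', EquivLike.range_comp, EquivLike.range_comp]
  exact Equiv.ext fun x => hinj (congrFun hcomp x)

lemma exists_mem_orderCell (hv : Injective v) (hbox : v ∈ Set.univ.pi fun _ => Set.Ioo θ t) :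
    ∃ σ : Equiv.Perm (Fin m), v ∈ orderCell m θ t σ := by
  refine ⟨Fin.revPerm.trans (Tuple.sort v), fun i j hij => ?_, fun i => Set.mem_univ_pi.1 hbox _⟩
  have hmono : StrictMono (v ∘ Tuple.sort v) :=
    (Tuple.monotone_sort v).strictMono_of_injective (hv.comp (Equiv.injective _))
  simpa using hmono (Fin.rev_lt_rev.2 hij)

lemma volume_setOf_apply_eq_apply {ι : Type*} [Fintype ι] {a b : ι} (hab : a ≠ b) :
    volume {v : ι → ℝ | v a = v b} = 0 := by
  classical
  let L : (ι → ℝ) →ₗ[ℝ] ℝ := LinearMap.proj (R := ℝ) (φ := fun _ : ι => ℝ) a - LinearMap.proj b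
  have hker : {v : ι → ℝ | v a = v b} = LinearMap.ker L := by
    ext v
    simp [L, sub_eq_zero]
  rw [hker]
  refine Measure.addHaar_submodule _ _ fun htop => ?_
  have hsingle : Pi.single a 1 ∈ LinearMap.ker L := htop ▸ Submodule.mem_top
  simp [L, Pi.single_eq_of_ne hab.symm] at hsingle

lemma ae_injective {ι : Type*} [Fintype ι] : ∀ᵐ v : ι → ℝ, Injective v := by
  simp only [Injective, ae_all_iff]
  intro a b
  by_cases hab : a = b
  · exact .of_forall fun _ _ => hab
  exact measure_mono_null (fun v hv => (Classical.not_imp.1 hv).1)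
    (volume_setOf_apply_eq_apply hab)

lemma coe_piCongrLeft_symm {ι ι' α : Type*} [MeasurableSpace α] (e : ι' ≃ ι) :
    ⇑(MeasurableEquiv.piCongrLeft (fun _ : ι => α) e).symm = fun v => v ∘ e := by
  ext v x
  simp [MeasurableEquiv.piCongrLeft]

lemma setIntegral_orderCell {E : Type*} [NormedAddCommGroup E] [NormedSpace ℝ E]
    (σ : Equiv.Perm (Fin m)) (Φ : (Fin m → ℝ) → E) :
    ∫ v in orderCell m θ t σ, Φ v = ∫ w in simplex m θ t, Φ (w ∘ ⇑σ⁻¹) := by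
  have hσ := (volume_measurePreserving_piCongrLeft (fun _ => ℝ) σ).symm
  have hemb := (MeasurableEquiv.piCongrLeft (fun _ => ℝ) σ).symm.measurableEmbedding
  rw [coe_piCongrLeft_symm] at hσ hemb
  simpa [orderCell, Function.comp_assoc] using
    hσ.setIntegral_preimage_emb hemb (fun w => Φ (w ∘ ⇑σ⁻¹)) _

lemma setIntegral_eq_sum_setIntegral_orderCell {E : Type*} [NormedAddCommGroup E]
    [NormedSpace ℝ E] {D : Set (Fin m → ℝ)} (S : Finset (Equiv.Perm (Fin m)))
    (hDbox : D ⊆ Set.univ.pi fun _ => Set.Ioo θ t)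
    (hD : ∀ σ, ∀ v ∈ orderCell m θ t σ, v ∈ D ↔ σ ∈ S) {Φ : (Fin m → ℝ) → E}
    (hΦ : ∀ σ ∈ S, IntegrableOn Φ (orderCell m θ t σ)) :
    ∫ v in D, Φ v = ∑ σ ∈ S, ∫ v in orderCell m θ t σ, Φ v := by
  rw [← integral_biUnion_finset S (fun σ _ => measurableSet_orderCell σ)
    (pairwise_disjoint_orderCell.set_pairwise _) hΦ]
  refine setIntegral_congr_set ?_
  filter_upwards [ae_injective] with v hv
  change (v ∈ D) = (v ∈ ⋃ σ ∈ S, orderCell m θ t σ)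
  simp only [Set.mem_iUnion, exists_prop, eq_iff_iff]
  constructor
  · intro hvD
    obtain ⟨σ, hσ⟩ := exists_mem_orderCell hv (hDbox hvD)
    exact ⟨σ, (hD σ v hσ).1 hvD, hσ⟩
  · rintro ⟨σ, hσS, hσ⟩
    exact (hD σ v hσ).2 hσS

end OrderCell

section Shuffle

variable {n p : ℕ}

lemma range_inv_comp_castAdd (σ : Equiv.Perm (Fin (n + p))) :
    Set.range (fun a => σ⁻¹ (Fin.castAdd p a)) = {x | (σ x : ℕ) < n} := by
  ext x
  constructor
  · rintro ⟨a, rfl⟩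
    simp
  · intro hx
    exact ⟨⟨σ x, hx⟩, by simp⟩

lemma range_inv_comp_natAdd (σ : Equiv.Perm (Fin (n + p))) :
    Set.range (fun b => σ⁻¹ (Fin.natAdd n b)) = {x | n ≤ (σ x : ℕ)} := by
  ext x
  constructor
  · rintro ⟨b, rfl⟩
    simp
  · intro (hx : n ≤ (σ x : ℕ))
    have hlt : (σ x : ℕ) - n < p := by have := (σ x).isLt; omega
    have hσx : Fin.natAdd n ⟨σ x - n, hlt⟩ = σ x := Fin.ext (by simp; omega)
    exact ⟨⟨σ x - n, hlt⟩, by simp [hσx]⟩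

def IsShuffle (n p : ℕ) (σ : Equiv.Perm (Fin (n + p))) : Prop :=
  StrictMono (fun a => σ⁻¹ (Fin.castAdd p a)) ∧ StrictMono (fun b => σ⁻¹ (Fin.natAdd n b))

lemma card_isShuffle_le [DecidablePred (IsShuffle n p)] :
    #{σ | IsShuffle n p σ} ≤ 2 ^ (n + p) := by
  calc _ ≤ #(univ : Finset (Finset (Fin (n + p)))) :=
        card_le_card_of_injOn (fun σ => ({x | (σ x : ℕ) < n} : Finset (Fin (n + p))))
          (fun _ _ => mem_univ _) ?_
    _ = 2 ^ (n + p) := by simp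
  intro σ hσ τ hτ hστ
  simp only [coe_filter, mem_univ, true_and, Set.mem_ofPred_eq] at hσ hτ
  have hlt : ∀ x, (σ x : ℕ) < n ↔ (τ x : ℕ) < n := by simpa [Finset.ext_iff] using hστ
  have hcast : (fun a => σ⁻¹ (Fin.castAdd p a)) = fun a => τ⁻¹ (Fin.castAdd p a) := by
    rw [← hσ.1.range_inj hτ.1, range_inv_comp_castAdd, range_inv_comp_castAdd]
    exact Set.ext hlt
  have hnat : (fun b => σ⁻¹ (Fin.natAdd n b)) = fun b => τ⁻¹ (Fin.natAdd n b) := by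
    rw [← hσ.2.range_inj hτ.2, range_inv_comp_natAdd, range_inv_comp_natAdd]
    exact Set.ext fun x => not_lt.symm.trans ((not_congr (hlt x)).trans not_lt)
  refine inv_injective (Equiv.ext fun x => ?_)
  exact Fin.addCases (motive := fun x => σ⁻¹ x = τ⁻¹ x) (congrFun hcast) (congrFun hnat) x

end Shuffle

lemma append_eq_left_or_right {α : Type*} {n p : ℕ} (f : Fin n → α) (g : Fin p → α)
    (y : Fin (n + p)) : (∃ j, Fin.append f g y = f j) ∨ ∃ i, Fin.append f g y = g i := by
  induction y using Fin.addCases with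
  | left a => exact Or.inl ⟨a, by simp⟩
  | right b => exact Or.inr ⟨b, by simp⟩

lemma integrableOn_univ_pi_prod {ι 𝕜 : Type*} [Fintype ι] [NormedCommRing 𝕜]
    {H : ι → ℝ → 𝕜} {s : ι → Set ℝ} (hH : ∀ l, IntegrableOn (H l) (s l)) :
    IntegrableOn (fun w : ι → ℝ => ∏ l, H l (w l)) (Set.univ.pi s) := by
  rw [IntegrableOn, volume_pi, Measure.restrict_pi_pi]
  exact Integrable.fintype_prod hH

lemma setIntegral_mul_setIntegral_eq_prod {α β 𝕜 : Type*} [RCLike 𝕜] [MeasurableSpace α]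
    [MeasurableSpace β] {μ : Measure α} {ν : Measure β} [SFinite μ] [SFinite ν]
    {S : Set α} {R : α → Set β} (hS : MeasurableSet S)
    (hE : MeasurableSet {z : α × β | z.1 ∈ S ∧ z.2 ∈ R z.1}) {F : α → 𝕜} {G : β → 𝕜}
    (hFG : IntegrableOn (fun z => F z.1 * G z.2) {z : α × β | z.1 ∈ S ∧ z.2 ∈ R z.1}
      (μ.prod ν)) :
    ∫ x in S, F x * ∫ y in R x, G y ∂ν ∂μ =
      ∫ z in {z : α × β | z.1 ∈ S ∧ z.2 ∈ R z.1}, F z.1 * G z.2 ∂μ.prod ν := by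
  rw [← integral_indicator hE, integral_prod _ ((integrable_indicator_iff hE).2 hFG),
    ← integral_indicator hS]
  congr 1 with x
  by_cases hx : x ∈ S
  · have hR : MeasurableSet (R x) := by simpa [hx] using measurable_prodMk_left hE (x := x)
    rw [Set.indicator_of_mem hx, ← integral_const_mul, ← integral_indicator hR]
    congr 1 with y
    by_cases hy : y ∈ R x <;> simp [Set.indicator, hx, hy]
  · simp [Set.indicator, hx]

def piFinAddEquivProd (n p : ℕ) : (Fin (n + p) → ℝ) ≃ᵐ (Fin n → ℝ) × (Fin p → ℝ) :=
  (MeasurableEquiv.piCongrLeft (fun _ => ℝ) finSumFinEquiv).symm.trans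
    (MeasurableEquiv.sumPiEquivProdPi fun _ => ℝ)

@[simp]
lemma piFinAddEquivProd_apply {n p : ℕ} (w : Fin (n + p) → ℝ) :
    piFinAddEquivProd n p w = (fun a => w (Fin.castAdd p a), fun b => w (Fin.natAdd n b)) := by
  ext <;> simp [piFinAddEquivProd, MeasurableEquiv.piCongrLeft,
    MeasurableEquiv.coe_sumPiEquivProdPi, Equiv.sumPiEquivProdPi]

lemma measurePreserving_piFinAddEquivProd (n p : ℕ) :
    MeasurePreserving (piFinAddEquivProd n p) :=
  (volume_measurePreserving_sumPiEquivProdPi _).comp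
    (volume_measurePreserving_piCongrLeft _ _).symm

section NestedRegion

variable {n p : ℕ} {θ t : ℝ}

/-- The domain of the nested integral, with the outer variables `s` in the first `n` coordinates
and the inner variables `r` in the last `p`. -/
def nestedRegion (n p : ℕ) (θ t : ℝ) (k : Fin n) : Set (Fin (n + p) → ℝ) :=
  piFinAddEquivProd n p ⁻¹' {z | z.1 ∈ simplex n θ t ∧ z.2 ∈ simplex p θ (z.1 k)}

lemma setIntegral_nestedRegion {f : Fin n → ℝ → ℝ} {g : Fin p → ℝ → ℝ} (k : Fin n)
    (hfg : IntegrableOn (fun w => ∏ l, Fin.append f g l (w l)) (nestedRegion n p θ t k)) :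
    ∫ s in simplex n θ t, (∏ j, f j (s j)) * ∫ r in simplex p θ (s k), ∏ i, g i (r i) =
      ∫ w in nestedRegion n p θ t k, ∏ l, Fin.append f g l (w l) := by
  set P : (Fin n → ℝ) × (Fin p → ℝ) → ℝ := fun z => (∏ j, f j (z.1 j)) * ∏ i, g i (z.2 i)
  have hP : (fun w => ∏ l, Fin.append f g l (w l)) = P ∘ piFinAddEquivProd n p := by
    ext w
    simp [P, Fin.prod_univ_add]
  have hE : MeasurableSet {z : (Fin n → ℝ) × (Fin p → ℝ) |
      z.1 ∈ simplex n θ t ∧ z.2 ∈ simplex p θ (z.1 k)} :=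
    (measurableSet_setOf_mem_simplex measurable_fst measurable_const).inter
      (measurableSet_setOf_mem_simplex measurable_snd ((measurable_pi_apply k).comp measurable_fst))
  have hemb := (piFinAddEquivProd n p).measurableEmbedding
  have hsplit := measurePreserving_piFinAddEquivProd n p
  rw [hP, nestedRegion, hsplit.integrableOn_comp_preimage hemb, Measure.volume_eq_prod] at hfg
  rw [hP, nestedRegion, Function.comp_def, hsplit.setIntegral_preimage_emb hemb,
    Measure.volume_eq_prod]
  exact setIntegral_mul_setIntegral_eq_prod measurableSet_simplex hE hfg

lemma nestedRegion_subset_pi (k : Fin n) :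
    nestedRegion n p θ t k ⊆ Set.univ.pi fun _ => Set.Ioo θ t := by
  rintro w ⟨⟨-, hs⟩, -, hr⟩
  refine Set.mem_univ_pi.2 fun l => Fin.addCases (fun a => ?_) (fun b => ?_) l
  · simpa using hs a
  · simpa using And.intro (hr b).1 ((hr b).2.trans (hs k).2)

def IsNestedShuffle (n p : ℕ) (k : Fin n) (σ : Equiv.Perm (Fin (n + p))) : Prop :=
  IsShuffle n p σ ∧ ∀ b, σ⁻¹ (Fin.castAdd p k) < σ⁻¹ (Fin.natAdd n b)

lemma mem_nestedRegion_iff {σ : Equiv.Perm (Fin (n + p))} {v : Fin (n + p) → ℝ}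
    (hv : v ∈ orderCell (n + p) θ t σ) (k : Fin n) :
    v ∈ nestedRegion n p θ t k ↔ IsNestedShuffle n p k σ := by
  have hbox : ∀ x, θ < v x ∧ v x < t := Set.mem_univ_pi.1 (orderCell_subset_pi hv)
  simp [nestedRegion, simplex, lt_iff_of_mem_orderCell hv, IsNestedShuffle, IsShuffle, StrictMono,
    hbox, and_assoc]

end NestedRegion

theorem nested_shuffle :
    ∃ C : ℝ, 1 ≤ C ∧
      ∀ (T θ t : ℝ), 0 ≤ θ → θ ≤ t → t ≤ T →
      ∀ (n p k : ℕ) (hk : 1 ≤ k) (hkn : k ≤ n) (hp : 1 ≤ p)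
        (f : Fin n → ℝ → ℝ) (g : Fin p → ℝ → ℝ),
        (∀ j, IntegrableOn (f j) (Set.Icc 0 T)) →
        (∀ i, IntegrableOn (g i) (Set.Icc 0 T)) →
        ∃ (A : Finset (Equiv.Perm (Fin (n + p))))
          (h : Equiv.Perm (Fin (n + p)) → Fin (n + p) → ℝ → ℝ),
          (A.card : ℝ) ≤ C ^ (n + p) ∧
          (∀ σ ∈ A, ∀ l, (∃ j, h σ l = f j) ∨ (∃ i, h σ l = g i)) ∧
          (∫ s in simplex n θ t,
              (∏ j : Fin n, f j (s j)) *
                ∫ r in simplex p θ (s ⟨k - 1, by omega⟩), ∏ i : Fin p, g i (r i)) =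
            ∑ σ ∈ A, ∫ w in simplex (n + p) θ t, ∏ l, h σ l (w l) := by
  classical
  refine ⟨2, one_le_two, fun T θ t hθ _ htT n p k hk hkn _ f g hf hg => ?_⟩
  set k' : Fin n := ⟨k - 1, by omega⟩
  have hbox : (Set.univ.pi fun _ : Fin (n + p) => Set.Ioo θ t) ⊆
      Set.univ.pi fun _ => Set.Icc 0 T :=
    Set.pi_mono fun _ _ => Set.Ioo_subset_Icc_self.trans (Set.Icc_subset_Icc hθ htT)
  have hint : IntegrableOn (fun w => ∏ l, Fin.append f g l (w l))
      (Set.univ.pi fun _ : Fin (n + p) => Set.Icc 0 T) :=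
    integrableOn_univ_pi_prod (Fin.addCases (by simpa using hf) (by simpa using hg))
  set A : Finset (Equiv.Perm (Fin (n + p))) := {σ | IsNestedShuffle n p k' σ}
  refine ⟨A, fun σ l => Fin.append f g (σ l), ?_, ?_, ?_⟩
  · have hcard := (card_le_card (monotone_filter_right univ (p := IsNestedShuffle n p k')
      (q := IsShuffle n p) fun _ _ hσ => hσ.1)).trans card_isShuffle_le
    exact_mod_cast hcard
  · exact fun σ _ l => append_eq_left_or_right f g (σ l)
  · rw [setIntegral_nestedRegion k' (hint.mono_set ((nestedRegion_subset_pi k').trans hbox)),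
      setIntegral_eq_sum_setIntegral_orderCell A (nestedRegion_subset_pi k')
        (fun σ v hv => (mem_nestedRegion_iff hv k').trans (by simp [A]))
        (fun σ _ => hint.mono_set (orderCell_subset_pi.trans hbox))]
    refine sum_congr rfl fun σ _ => ?_
    rw [setIntegral_orderCell]
    congr 1 with w
    simpa using (Equiv.prod_comp σ fun l => Fin.append f g l (w (σ⁻¹ l))).symm
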